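/- Let α ≥ 0, x ∈ ℝ^n with E_1(x) ≥ 0, ..., E_s(x) ≥ 0, and 1 ≤ k ≤ s. Then S_{k;s}(x)² − S_{k-1;s}(x)S_{k+1;s}(x) ≥ 0, where S_{m;s}(x) = ∑_{i=0}^s C(s,i)α^i E_{m-i}(x). (In particular each coefficient L_b of α^b, 0 ≤ b ≤ 2k, in the expansion of S_{k;s}² − S_{k-1;s}S_{k+1;s} is nonnegative.) -/

import Mathlib

/-!
Write `S_m = ∑ᵢ cᵢ e_{m-i}` with `cᵢ = C(s,i) αⁱ` and `e = E(x)`, both extended by zero. Shifting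
the summation index in one factor turns `S_k² - S_{k-1} S_{k+1}` into
`∑_{i,j} (cᵢ c_{j-1} - c_{i-1} cⱼ) e_{k-i} e_{k+1-j}`, whose kernel is antisymmetric in `(i, j)`.
Symmetrizing gives a sum of products
`(cᵢ c_{j-1} - c_{i-1} cⱼ) (e_{k-i} e_{k+1-j} - e_{k-j} e_{k+1-i})` whose two factors have the same
sign, because both `c` and `e` have decreasing successive ratios. For `c` this is an inequality
between binomial coefficients. For `e` it follows from Newton's inequalities as soon as
`E_0, …, E_k` are positive, which holds after replacing `x` by `x + ε`; then let `ε → 0`.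

Newton's inequalities are proved for real-rooted polynomials in the classical way: differentiating
(Rolle) and reflecting preserve real-rootedness and move the normalized coefficients, which reduces
everything to a quadratic, where the inequality is the sign of the discriminant.
-/

/-- The k-th elementary symmetric polynomial of `x : Fin n → ℝ`, with the
conventions `σ_0 = 1` and `σ_k = 0` for `k < 0` or `k > n`. -/
noncomputable def esymm (n : ℕ) (x : Fin n → ℝ) (k : ℤ) : ℝ :=
  if 0 ≤ k then ∑ s ∈ (Finset.univ : Finset (Fin n)).powersetCard k.toNat, ∏ i ∈ s, x i else 0

/-- The normalized elementary symmetric mean `E_k(x) = σ_k(x) / C(n,k)`. -/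
noncomputable def Esymm (n : ℕ) (x : Fin n → ℝ) (k : ℤ) : ℝ :=
  esymm n x k / (n.choose k.toNat)


/-- `S_{m;s}(x) = ∑_{i=0}^{s} C(s,i) α^i E_{m-i}(x)`. -/
noncomputable def Ss (n : ℕ) (α : ℝ) (x : Fin n → ℝ) (s : ℕ) (m : ℤ) : ℝ :=
  ∑ i ∈ Finset.range (s + 1), (s.choose i : ℝ) * α ^ i * Esymm n x (m - i)

open Finset Polynomial

namespace Polynomial

theorem Splits.derivative {P : ℝ[X]} (hP : P.Splits) : P.derivative.Splits := by
  rw [splits_iff_card_roots] at hP ⊢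
  have := card_roots_le_derivative P
  have := natDegree_derivative_le P
  exact le_antisymm (card_roots' _) (by omega)

theorem Splits.reverse {K : Type*} [Field K] {P : K[X]} (hP : P.Splits) : P.reverse.Splits := by
  induction hP using Submonoid.closure_induction with
  | mem f hf =>
    refine Splits.of_natDegree_le_one ((reverse_natDegree_le f).trans ?_)
    rcases hf with ⟨a, rfl⟩ | ⟨a, rfl⟩
    · exact natDegree_C a ▸ zero_le_one
    · exact natDegree_add_C.trans_le natDegree_X_le
  | one => exact Splits.of_natDegree_le_one ((reverse_natDegree_le 1).trans (by simp))
  | mul f g _ _ hf hg => rw [reverse_mul_of_domain]; exact hf.mul hg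

theorem Splits.reflect {K : Type*} [Field K] {P : K[X]} (hP : P.Splits) {N : ℕ}
    (hN : P.natDegree ≤ N) : (P.reflect N).Splits := by
  have h := reflect_mul 1 P (F := N - P.natDegree) (G := P.natDegree) (by simp) le_rfl
  rw [Nat.sub_add_cancel hN, one_mul, reflect_one] at h
  rw [h]
  exact (Splits.X_pow _).mul hP.reverse

/-- `normCoeff n P j = a_j` when `P = ∑ⱼ C(n, j) a_j Xʲ`; here `n` is a formal degree, which may
exceed `P.natDegree`. -/
noncomputable def normCoeff (n : ℕ) (P : ℝ[X]) (j : ℕ) : ℝ := P.coeff j / n.choose j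

theorem normCoeff_of_lt {n j : ℕ} (h : n < j) (P : ℝ[X]) : normCoeff n P j = 0 := by
  simp [normCoeff, Nat.choose_eq_zero_of_lt h]

theorem normCoeff_derivative (m : ℕ) (P : ℝ[X]) (i : ℕ) :
    normCoeff m (derivative P) i = (m + 1) * normCoeff (m + 1) P (i + 1) := by
  rcases lt_or_ge m i with h | h
  · rw [normCoeff_of_lt h, normCoeff_of_lt (by omega), mul_zero]
  have h1 : (0 : ℝ) < m.choose i := by exact_mod_cast Nat.choose_pos h
  have h2 : (0 : ℝ) < (m + 1).choose (i + 1) := by exact_mod_cast Nat.choose_pos (by omega)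
  have hchoose : ((m + 1 : ℕ) : ℝ) * m.choose i = (m + 1).choose (i + 1) * (i + 1 : ℕ) := by
    exact_mod_cast Nat.add_one_mul_choose_eq m i
  push_cast at hchoose
  rw [normCoeff, normCoeff, coeff_derivative, mul_div_assoc', div_eq_div_iff h1.ne' h2.ne']
  linear_combination (-P.coeff (i + 1)) * hchoose

theorem normCoeff_reflect (n : ℕ) (P : ℝ[X]) {i : ℕ} (hi : i ≤ n) :
    normCoeff n (reflect n P) i = normCoeff n P (n - i) := by
  rw [normCoeff, normCoeff, coeff_reflect, revAt_le hi, Nat.choose_symm hi]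

theorem Splits.normCoeff_newton_two {P : ℝ[X]} (hP : P.Splits) (hdeg : P.natDegree ≤ 2) :
    normCoeff 2 P 0 * normCoeff 2 P 2 ≤ normCoeff 2 P 1 ^ 2 := by
  simp only [normCoeff, Nat.choose_zero_right, Nat.choose_self, Nat.choose_one_right,
    Nat.cast_one, div_one, Nat.cast_ofNat]
  rcases eq_or_ne (P.coeff 2) 0 with h2 | h2
  · rw [h2, mul_zero]; positivity
  have hdeg2 : P.degree ≠ 0 := by
    rw [degree_eq_natDegree (by rintro rfl; simp at h2), Nat.cast_ne_zero]
    exact fun h => h2 (coeff_eq_zero_of_natDegree_lt (by omega))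
  obtain ⟨x, hx⟩ := hP.exists_eval_eq_zero hdeg2
  rw [eval_eq_sum_range' (n := 3) (by omega)] at hx
  simp only [sum_range_succ, sum_range_zero, pow_zero, pow_one, mul_one, zero_add] at hx
  have hdiscrim :
      P.coeff 1 ^ 2 - 4 * P.coeff 0 * P.coeff 2 = (2 * P.coeff 2 * x + P.coeff 1) ^ 2 := by
    linear_combination (-4 * P.coeff 2) * hx
  linarith [sq_nonneg (2 * P.coeff 2 * x + P.coeff 1)]

theorem Splits.normCoeff_newton {P : ℝ[X]} (hP : P.Splits) {n : ℕ} (hn : P.natDegree ≤ n)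
    (j : ℕ) : normCoeff n P j * normCoeff n P (j + 2) ≤ normCoeff n P (j + 1) ^ 2 := by
  induction n using Nat.strong_induction_on generalizing P j with
  | _ n ih =>
    rcases lt_or_ge n (j + 2) with hj | hj
    · rw [normCoeff_of_lt hj, mul_zero]; positivity
    have of_derivative : ∀ Q : ℝ[X], Q.Splits → Q.natDegree ≤ n → ∀ i,
        normCoeff n Q (i + 1) * normCoeff n Q (i + 3) ≤ normCoeff n Q (i + 2) ^ 2 := by
      intro Q hQ hQn i
      obtain ⟨m, rfl⟩ : ∃ m, n = m + 1 := ⟨n - 1, by omega⟩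
      have h := ih m (by omega) hQ.derivative ((natDegree_derivative_le Q).trans (by omega)) i
      simp only [normCoeff_derivative] at h
      nlinarith [show (0 : ℝ) < (m + 1) ^ 2 by positivity]
    rcases j with _ | i
    · rcases hj.eq_or_lt with rfl | hn3
      · exact hP.normCoeff_newton_two hn
      obtain ⟨i, rfl⟩ : ∃ i, n = i + 3 := ⟨n - 3, by omega⟩
      have h := of_derivative _ (hP.reflect hn) (natDegree_reflect_le.trans (max_le le_rfl hn)) i
      rw [normCoeff_reflect _ _ (by omega), normCoeff_reflect _ _ (by omega),
        normCoeff_reflect _ _ (by omega), show i + 3 - (i + 1) = 2 by omega,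
        show i + 3 - (i + 3) = 0 by omega, show i + 3 - (i + 2) = 1 by omega] at h
      linarith
    · exact of_derivative P hP hn i

theorem coeff_taylor_pos {R : Type*} [CommRing R] [LinearOrder R] [IsStrictOrderedRing R]
    {P : R[X]} {ε : R} (hε : 0 < ε) (hlead : 0 < P.leadingCoeff) {c : ℕ} (hc : c ≤ P.natDegree)
    (hP : ∀ i, c ≤ i → 0 ≤ P.coeff i) : 0 < (taylor ε P).coeff c := by
  rw [taylor_coeff, eval_eq_sum_range, natDegree_hasseDeriv]
  apply sum_pos'
  · intro d _
    have := hP (d + c) (by omega)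
    rw [hasseDeriv_coeff]
    positivity
  · refine ⟨P.natDegree - c, by simp, ?_⟩
    have : (0 : R) < P.natDegree.choose c := by exact_mod_cast Nat.choose_pos hc
    rw [hasseDeriv_coeff, Nat.sub_add_cancel hc, coeff_natDegree]
    positivity

end Polynomial

section Esymm

variable (n : ℕ) (x : Fin n → ℝ)

theorem esymm_natCast (j : ℕ) :
    esymm n x j = ∑ t ∈ (univ : Finset (Fin n)).powersetCard j, ∏ i ∈ t, x i := by
  simp [esymm]

theorem Esymm_natCast (j : ℕ) : Esymm n x j = esymm n x j / n.choose j := by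
  simp [Esymm]

theorem Esymm_of_neg {m : ℤ} (hm : m < 0) : Esymm n x m = 0 := by
  simp [Esymm, esymm, not_le.mpr hm]

theorem Esymm_of_lt {j : ℕ} (hj : n < j) : Esymm n x j = 0 := by
  simp [Esymm_natCast, Nat.choose_eq_zero_of_lt hj]

theorem Esymm_nonneg_iff {j : ℕ} (hj : j ≤ n) : 0 ≤ Esymm n x j ↔ 0 ≤ esymm n x j := by
  rw [Esymm_natCast, le_div_iff₀ (by exact_mod_cast Nat.choose_pos hj), zero_mul]

theorem monic_prod_X_add_C : (∏ i, (X + C (x i))).Monic :=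
  monic_prod_of_monic _ _ fun i _ => monic_X_add_C (x i)

theorem natDegree_prod_X_add_C : (∏ i, (X + C (x i))).natDegree = n := by
  rw [natDegree_prod_of_monic _ _ fun i _ => monic_X_add_C (x i)]
  simp

theorem esymm_eq_coeff {j : ℕ} (hj : j ≤ n) :
    esymm n x j = (∏ i, (X + C (x i))).coeff (n - j) := by
  rw [Finset.prod_X_add_C_coeff _ _ (by simp), esymm_natCast, card_univ, Fintype.card_fin,
    Nat.sub_sub_self hj]

theorem Esymm_eq_normCoeff {j : ℕ} (hj : j ≤ n) :
    Esymm n x j = normCoeff n (∏ i, (X + C (x i))) (n - j) := by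
  rw [Esymm_natCast, esymm_eq_coeff n x hj, normCoeff, Nat.choose_symm hj]

theorem Esymm_newton (m : ℤ) : Esymm n x (m - 1) * Esymm n x (m + 1) ≤ Esymm n x m ^ 2 := by
  rcases lt_or_ge m 1 with hm | hm
  · rw [Esymm_of_neg n x (by omega), zero_mul]; positivity
  obtain ⟨j, rfl⟩ : ∃ j : ℕ, m = j + 1 := ⟨(m - 1).toNat, by omega⟩
  rcases lt_or_ge n (j + 2) with hn | hn
  · rw [show (j : ℤ) + 1 + 1 = (j + 2 : ℕ) by push_cast; ring, Esymm_of_lt n x hn, mul_zero]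
    positivity
  have h := (Splits.prod fun i _ => Splits.X_add_C (x i)).normCoeff_newton
    (natDegree_prod_X_add_C n x).le (n - (j + 2))
  rw [show n - (j + 2) + 2 = n - j by omega, show n - (j + 2) + 1 = n - (j + 1) by omega] at h
  rw [show (j : ℤ) + 1 - 1 = (j : ℕ) by ring, show (j : ℤ) + 1 + 1 = (j + 2 : ℕ) by push_cast; ring,
    show (j : ℤ) + 1 = (j + 1 : ℕ) by push_cast; ring, Esymm_eq_normCoeff n x (by omega),
    Esymm_eq_normCoeff n x hn, Esymm_eq_normCoeff n x (by omega)]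
  linarith

theorem prod_X_add_C_add (ε : ℝ) :
    ∏ i, (X + C (x i + ε)) = taylor ε (∏ i, (X + C (x i))) := by
  change _ = taylorAlgHom ε _
  rw [map_prod]
  simp [taylor_X, taylor_C, add_assoc, add_comm (C ε)]

theorem Esymm_add_pos {ε : ℝ} (hε : 0 < ε) {m : ℕ} (hm : m ≤ n)
    (hx : ∀ j : ℕ, 1 ≤ j → j ≤ m → 0 ≤ Esymm n x j) : 0 < Esymm n (fun i => x i + ε) m := by
  have hchoose : (0 : ℝ) < n.choose m := by exact_mod_cast Nat.choose_pos hm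
  rw [Esymm_natCast, esymm_eq_coeff _ _ hm, prod_X_add_C_add]
  refine div_pos (coeff_taylor_pos hε ?_ ?_ fun i hi => ?_) hchoose
  · rw [(monic_prod_X_add_C n x).leadingCoeff]; exact one_pos
  · rw [natDegree_prod_X_add_C]; omega
  rcases le_or_gt i n with hin | hin
  · rw [show i = n - (n - i) by omega, ← esymm_eq_coeff n x (by omega)]
    rcases Nat.eq_zero_or_pos (n - i) with h0 | hpos
    · rw [h0]; simp [esymm]
    · exact (Esymm_nonneg_iff n x (by omega)).1 (hx _ hpos (by omega))
  · rw [coeff_eq_zero_of_natDegree_lt (by rw [natDegree_prod_X_add_C]; exact hin)]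

theorem continuous_Esymm_add (m : ℤ) : Continuous fun ε : ℝ => Esymm n (fun i => x i + ε) m := by
  unfold Esymm esymm
  split_ifs <;> fun_prop

end Esymm

/-- The successive ratios `f (q + 1) / f q` decrease for `q ≤ K`, written without division. -/
def SuccRatioAntitone (f : ℤ → ℝ) (K : ℤ) : Prop :=
  ∀ p q : ℤ, p ≤ q → q ≤ K → f p * f (q + 1) ≤ f (p + 1) * f q

theorem succRatioAntitone_of_newton {f : ℤ → ℝ} {K N : ℤ} (hneg : ∀ m < 0, f m = 0)
    (htop : ∀ m, N < m → f m = 0) (hpos : ∀ m, 0 ≤ m → m ≤ K → m ≤ N → 0 < f m)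
    (hnewton : ∀ m, f (m - 1) * f (m + 1) ≤ f m ^ 2) : SuccRatioAntitone f K := by
  have hnn : ∀ m ≤ K, 0 ≤ f m := fun m hm => by
    rcases lt_or_ge m 0 with h0 | h0
    · exact (hneg m h0).ge
    rcases le_or_gt m N with hN | hN
    · exact (hpos m h0 hm hN).le
    · exact (htop m hN).ge
  intro p q hpq hqK
  rcases lt_or_ge N q with hqN | hqN
  · rw [htop q hqN, htop (q + 1) (by omega), mul_zero, mul_zero]
  rcases lt_or_ge p 0 with hp | hp
  · rcases lt_or_ge q 0 with hq | hq
    · rw [hneg q hq, mul_zero, hneg p hp, zero_mul]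
    rw [hneg p hp, zero_mul]
    exact mul_nonneg (hnn _ (by omega)) (hnn q hqK)
  induction q, hpq using Int.leInduction with
  | base => rw [mul_comm]
  | succ q hpq ih =>
    have hq : 0 < f q := hpos q (by omega) (by omega) (by omega)
    -- after multiplying by `f q`: `f p f (q+2) f q ≤ f p f (q+1)² ≤ f (p+1) f q f (q+1)`
    have hstep := mul_le_mul_of_nonneg_left (add_sub_cancel_right q 1 ▸ hnewton (q + 1))
      (hnn p (by omega))
    have hind := mul_le_mul_of_nonneg_right (ih (by omega) (by omega)) (hnn (q + 1) hqK)
    nlinarith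

theorem sum_sum_mul_nonneg_of_antisymm {R ι : Type*} [CommRing R] [LinearOrder R]
    [IsStrictOrderedRing R] (s : Finset ι) {A B : ι → ι → R} (hA : ∀ i j, A j i = -A i j)
    (h : ∀ i ∈ s, ∀ j ∈ s, 0 ≤ A i j * (B i j - B j i)) :
    0 ≤ ∑ i ∈ s, ∑ j ∈ s, A i j * B i j := by
  have htranspose : ∑ i ∈ s, ∑ j ∈ s, A i j * B j i = -∑ i ∈ s, ∑ j ∈ s, A i j * B i j := by
    rw [sum_comm, ← sum_neg_distrib]
    refine sum_congr rfl fun i _ => ?_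
    rw [← sum_neg_distrib]
    exact sum_congr rfl fun j _ => by rw [hA]; ring
  have hsum : 0 ≤ ∑ i ∈ s, ∑ j ∈ s, A i j * (B i j - B j i) :=
    sum_nonneg fun i hi => sum_nonneg fun j hj => h i hi j hj
  simp only [mul_sub, sum_sub_distrib, htranspose] at hsum
  linarith

theorem convolution_newton {c e : ℤ → ℝ} {N : ℕ} {k : ℤ} (hc_neg : c (-1) = 0)
    (hc_top : c (N + 1) = 0) (hc : SuccRatioAntitone c N) (he : SuccRatioAntitone e k) :
    (∑ i ∈ range (N + 1), c i * e (k - 1 - i)) * (∑ i ∈ range (N + 1), c i * e (k + 1 - i)) ≤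
      (∑ i ∈ range (N + 1), c i * e (k - i)) ^ 2 := by
  set S : ℤ → ℝ := fun m => ∑ i ∈ range (N + 1), c i * e (m - i)
  have hext : ∀ m, S m = ∑ i ∈ range (N + 2), c i * e (m - i) := fun m => by
    rw [sum_range_succ, Nat.cast_add_one, hc_top, zero_mul, add_zero]
  have hshift : ∀ m, S m = ∑ j ∈ range (N + 2), c (j - 1) * e (m + 1 - j) := fun m => by
    rw [sum_range_succ']
    simp only [Nat.cast_zero, zero_sub, hc_neg, zero_mul, add_zero, Nat.cast_add_one]
    exact sum_congr rfl fun i _ => by ring_nf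
  have hexpand : S k ^ 2 - S (k - 1) * S (k + 1) = ∑ i ∈ range (N + 2), ∑ j ∈ range (N + 2),
      (c i * c (j - 1) - c (i - 1) * c j) * (e (k - i) * e (k + 1 - j)) := by
    rw [sq]
    nth_rewrite 1 [hext k]
    rw [hshift k, hshift (k - 1), hext (k + 1), sum_mul_sum, sum_mul_sum, ← sum_sub_distrib]
    refine sum_congr rfl fun i _ => ?_
    rw [← sum_sub_distrib]
    exact sum_congr rfl fun j _ => by ring_nf
  have hc' : ∀ p q : ℤ, p ≤ q → q ≤ N + 1 → c (p - 1) * c q ≤ c p * c (q - 1) :=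
    fun p q hpq hq => by simpa using hc (p - 1) (q - 1) (by omega) (by omega)
  have he' : ∀ p q : ℤ, 0 ≤ p → p ≤ q → e (k - q) * e (k + 1 - p) ≤ e (k + 1 - q) * e (k - p) :=
    fun p q hp hpq => by simpa [sub_add_eq_add_sub] using he (k - q) (k - p) (by omega) (by omega)
  change S (k - 1) * S (k + 1) ≤ S k ^ 2
  rw [← sub_nonneg, hexpand]
  refine sum_sum_mul_nonneg_of_antisymm _ (fun i j => by ring) fun i hi j hj => ?_
  rw [mem_range] at hi hj
  rcases le_total i j with hij | hij
  · exact mul_nonneg (by linarith [hc' i j (by omega) (by omega)])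
      (by linarith [he' i j (by omega) (by omega)])
  · exact mul_nonneg_of_nonpos_of_nonpos (by linarith [hc' j i (by omega) (by omega)])
      (by linarith [he' j i (by omega) (by omega)])

theorem Nat.choose_mul_choose_succ_le (s : ℕ) {p q : ℕ} (h : p ≤ q) :
    s.choose p * s.choose (q + 1) ≤ s.choose (p + 1) * s.choose q := by
  refine Nat.le_of_mul_le_mul_right (c := (p + 1) * (q + 1)) ?_ (by positivity)
  calc s.choose p * s.choose (q + 1) * ((p + 1) * (q + 1))
      = s.choose p * (p + 1) * (s.choose (q + 1) * (q + 1)) := by ring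
    _ = s.choose p * s.choose q * ((s - q) * (p + 1)) := by rw [Nat.choose_succ_right_eq]; ring
    _ ≤ s.choose p * s.choose q * ((s - p) * (q + 1)) :=
        Nat.mul_le_mul_left _ (Nat.mul_le_mul (by omega) (by omega))
    _ = s.choose (p + 1) * (p + 1) * (s.choose q * (q + 1)) := by
        rw [Nat.choose_succ_right_eq]; ring
    _ = s.choose (p + 1) * s.choose q * ((p + 1) * (q + 1)) := by ring

noncomputable def binomialWeight (s : ℕ) (α : ℝ) (i : ℤ) : ℝ :=
  if 0 ≤ i then s.choose i.toNat * α ^ i.toNat else 0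

theorem succRatioAntitone_binomialWeight (s : ℕ) {α : ℝ} (hα : 0 ≤ α) (K : ℤ) :
    SuccRatioAntitone (binomialWeight s α) K := by
  intro p q hpq _
  rcases lt_or_ge p 0 with hp | hp
  · simp only [binomialWeight, if_neg (not_le.mpr hp), zero_mul]
    split_ifs <;> positivity
  lift p to ℕ using hp
  lift q to ℕ using (by omega)
  have hchoose : (s.choose p * s.choose (q + 1) : ℝ) ≤ s.choose (p + 1) * s.choose q := by
    exact_mod_cast Nat.choose_mul_choose_succ_le s (by omega)
  simp only [binomialWeight, ← Nat.cast_add_one, Nat.cast_nonneg, if_true, Int.toNat_natCast]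
  calc (s.choose p : ℝ) * α ^ p * (s.choose (q + 1) * α ^ (q + 1))
      = s.choose p * s.choose (q + 1) * α ^ (p + q + 1) := by ring
    _ ≤ s.choose (p + 1) * s.choose q * α ^ (p + q + 1) := by gcongr
    _ = s.choose (p + 1) * α ^ (p + 1) * (s.choose q * α ^ q) := by ring

theorem Ss_eq_sum_binomialWeight (n : ℕ) (α : ℝ) (x : Fin n → ℝ) (s : ℕ) (m : ℤ) :
    Ss n α x s m = ∑ i ∈ range (s + 1), binomialWeight s α i * Esymm n x (m - i) := by
  simp [Ss, binomialWeight, mul_assoc]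

theorem succRatioAntitone_Esymm_add (n : ℕ) (x : Fin n → ℝ) {ε : ℝ} (hε : 0 < ε) {K : ℕ}
    (hx : ∀ j : ℕ, 1 ≤ j → j ≤ K → 0 ≤ Esymm n x j) :
    SuccRatioAntitone (Esymm n fun i => x i + ε) K := by
  refine succRatioAntitone_of_newton (N := n) (fun m hm => Esymm_of_neg n _ hm) (fun m hm => ?_)
    (fun m h0 hK hN => ?_) (Esymm_newton n _)
  · lift m to ℕ using (by omega)
    exact Esymm_of_lt n _ (by omega)
  · lift m to ℕ using h0
    exact Esymm_add_pos n x hε (by omega) fun j hj hjm => hx j hj (by omega)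

theorem continuous_Ss_add (n : ℕ) (α : ℝ) (x : Fin n → ℝ) (s : ℕ) (m : ℤ) :
    Continuous fun ε : ℝ => Ss n α (fun i => x i + ε) s m :=
  continuous_finsetSum _ fun _ _ => continuous_const.mul (continuous_Esymm_add n x _)

theorem Ss_newton_low_general (n s k : ℕ) (α : ℝ) (x : Fin n → ℝ)
    (hα : 0 ≤ α) (hE : ∀ i : ℕ, 1 ≤ i → i ≤ s → 0 ≤ Esymm n x i)
    (hk2 : k ≤ s) :
    0 ≤ Ss n α x s k ^ 2 - Ss n α x s ((k : ℤ) - 1) * Ss n α x s ((k : ℤ) + 1) := by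
  let F : ℝ → ℝ := fun ε => Ss n α (fun i => x i + ε) s k ^ 2 -
    Ss n α (fun i => x i + ε) s ((k : ℤ) - 1) * Ss n α (fun i => x i + ε) s ((k : ℤ) + 1)
  have hF : Continuous F :=
    ((continuous_Ss_add n α x s _).pow 2).sub
      ((continuous_Ss_add n α x s _).mul (continuous_Ss_add n α x s _))
  have hF_pos : ∀ ε ∈ Set.Ioi (0 : ℝ), 0 ≤ F ε := fun ε hε => by
    simp only [F, Ss_eq_sum_binomialWeight, sub_nonneg]
    exact convolution_newton (by simp [binomialWeight]) (by simp [binomialWeight])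
      (succRatioAntitone_binomialWeight s hα s)
      (succRatioAntitone_Esymm_add n x hε fun j hj hjk => hE j hj (hjk.trans hk2))
  simpa [F] using ge_of_tendsto ((hF.tendsto 0).mono_left nhdsWithin_le_nhds)
    (eventually_nhdsWithin_of_forall hF_pos)

theorem Ss_newton_low (n s k : ℕ) (α : ℝ) (x : Fin n → ℝ)
    (hα : 0 ≤ α) (hE : ∀ i : ℕ, 1 ≤ i → i ≤ s → 0 ≤ Esymm n x i)
    (hk1 : 1 ≤ k) (hk2 : k ≤ s) :
    0 ≤ Ss n α x s k ^ 2 - Ss n α x s ((k : ℤ) - 1) * Ss n α x s ((k : ℤ) + 1) :=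
  Ss_newton_low_general n s k α x hα hE hk2
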